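/- arXiv:2106.05099 — 2 statements merged into one kernel-verified Lean document; each statement's English description precedes it below -/
import Mathlib

section
/- Let n ≥ 1 players have capacities b_i ∈ ℕ and let each cost function f_i : {0,1,…,b_i} → ℝ be discretely convex and non-increasing. Let x be an allocation with 0 ≤ x_i ≤ b_i for all i and Σ_i x_i = B. Suppose that for every pair of distinct players i, j with x_i > 0 and x_j < b_j one has f_j(x_j) − f_j(x_j + 1) ≤ f_i(x_i − 1) − f_i(x_i) (no single-item move can improve the allocation). Then x is globally optimal: for every allocation y with 0 ≤ y_i ≤ b_i for all i and Σ_i y_i = B, Σ_i f_i(x_i) ≤ Σ_i f_i(y_i). -/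
private lemma diff_mono (g : ℤ → ℝ) (bnd : ℤ)
    (hconv : ∀ k : ℤ, 1 ≤ k → k ≤ bnd - 1 → g k - g (k - 1) ≤ g (k + 1) - g k)
    (a c : ℤ) (ha : 0 ≤ a) (hac : a ≤ c) (hc : c ≤ bnd - 1) :
    g (a + 1) - g a ≤ g (c + 1) - g c := by
  obtain ⟨m, rfl⟩ := Int.le.dest hac
  clear hac
  induction m with
  | zero => simp
  | succ m ih =>
    have hm : a + (m : ℤ) ≤ bnd - 1 := by push_cast at hc ⊢; omega
    have h1 := ih hm
    have h2 := hconv (a + (m : ℤ) + 1) (by omega) (by push_cast at hc ⊢; omega)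
    have e : a + (m : ℤ) + 1 - 1 = a + (m : ℤ) := by ring
    rw [e] at h2
    have e2 : a + ((m : ℤ) + 1) = a + (m : ℤ) + 1 := by ring
    push_cast
    rw [e2]
    linarith

private lemma sum_update_eq {n : ℕ} {M : Type*} [AddCommGroup M] (f : Fin n → ℤ → M)
    (u : Fin n → ℤ) (j : Fin n) (v : ℤ) :
    ∑ k, f k (Function.update u j v k) = ∑ k, f k (u k) + (f j v - f j (u j)) := by
  have h : ∑ k, (f k (Function.update u j v k) - f k (u k)) = f j v - f j (u j) := by
    rw [Finset.sum_eq_single j]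
    · simp
    · intro k _ hk; simp [Function.update_of_ne hk]
    · simp
  rw [Finset.sum_sub_distrib] at h
  rw [← h]; abel

/-- If no single-item move between two players can improve a feasible
allocation `x` (1-opt stability), and all cost functions are discretely convex and
non-increasing on `{0,…,b i}`, then `x` is globally optimal for the separable resource
allocation problem with budget `B`. -/
theorem oneOpt_stable_implies_optimal
    (n : ℕ) (hn : 1 ≤ n) (b : Fin n → ℤ) (f : Fin n → ℤ → ℝ) (B : ℤ)
    (hconv : ∀ i, ∀ k : ℤ, 1 ≤ k → k ≤ b i - 1 →
      f i k - f i (k - 1) ≤ f i (k + 1) - f i k)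
    (hmono : ∀ i, ∀ k : ℤ, 0 ≤ k → k ≤ b i - 1 → f i (k + 1) ≤ f i k)
    (x : Fin n → ℤ) (hx : ∀ i, 0 ≤ x i ∧ x i ≤ b i) (hxB : ∑ i, x i = B)
    (hstable : ∀ i j, i ≠ j → 0 < x i → x j < b j →
      f j (x j) - f j (x j + 1) ≤ f i (x i - 1) - f i (x i))
    (y : Fin n → ℤ) (hy : ∀ i, 0 ≤ y i ∧ y i ≤ b i) (hyB : ∑ i, y i = B) :
    ∑ i, f i (x i) ≤ ∑ i, f i (y i) := by
  clear hn hmono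
  subst hxB
  suffices H : ∀ N : ℕ, ∀ y : Fin n → ℤ, (∀ i, 0 ≤ y i ∧ y i ≤ b i) →
      ∑ i, y i = ∑ i, x i → (∑ i, |x i - y i|).toNat ≤ N →
      ∑ i, f i (x i) ≤ ∑ i, f i (y i) by
    exact H (∑ i, |x i - y i|).toNat y hy hyB le_rfl
  intro N
  induction N with
  | zero =>
    intro y hy hyB hN
    have hnn : (0:ℤ) ≤ ∑ i, |x i - y i| := Finset.sum_nonneg fun i _ => abs_nonneg _
    have h0 : ∑ i, |x i - y i| = 0 := by omega
    have hxy : ∀ i, x i = y i := by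
      intro i
      have := (Finset.sum_eq_zero_iff_of_nonneg (fun i _ => abs_nonneg (x i - y i))).mp h0
        i (Finset.mem_univ i)
      have := abs_eq_zero.mp this
      omega
    exact le_of_eq (Finset.sum_congr rfl fun i _ => by rw [hxy i])
  | succ N ih =>
    intro y hy hyB hN
    by_cases hxy : ∀ i, x i = y i
    · exact le_of_eq (Finset.sum_congr rfl fun i _ => by rw [hxy i])
    push_neg at hxy
    obtain ⟨i0, hi0⟩ := hxy
    -- find i with x i < y i and j with y j < x j
    have hex : ∃ i, x i < y i := by
      by_contra hc
      push_neg at hc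
      have : ∑ i, y i < ∑ i, x i :=
        Finset.sum_lt_sum (fun i _ => hc i) ⟨i0, Finset.mem_univ i0, lt_of_le_of_ne (hc i0) (Ne.symm hi0)⟩
      omega
    have hex' : ∃ j, y j < x j := by
      by_contra hc
      push_neg at hc
      have : ∑ i, x i < ∑ i, y i :=
        Finset.sum_lt_sum (fun i _ => hc i) ⟨i0, Finset.mem_univ i0, lt_of_le_of_ne (hc i0) hi0⟩
      omega
    obtain ⟨i, hi⟩ := hex
    obtain ⟨j, hj⟩ := hex'
    have hij : i ≠ j := fun h => by rw [h] at hi; omega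
    set u : Fin n → ℤ := Function.update y i (y i - 1) with hu
    set y' : Fin n → ℤ := Function.update u j (y j + 1) with hy'
    have huj : u j = y j := Function.update_of_ne (Ne.symm hij) _ _
    have hy'i : y' i = y i - 1 := by
      rw [hy', Function.update_of_ne hij, hu, Function.update_self]
    have hy'j : y' j = y j + 1 := by rw [hy', Function.update_self]
    have hy'k : ∀ k, k ≠ i → k ≠ j → y' k = y k := by
      intro k hki hkj
      rw [hy', Function.update_of_ne hkj, hu, Function.update_of_ne hki]
    -- feasibility of y'
    have hfeas : ∀ k, 0 ≤ y' k ∧ y' k ≤ b k := by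
      intro k
      by_cases hki : k = i
      · subst hki; rw [hy'i]; have := (hx k).1; have := (hy k).2; omega
      by_cases hkj : k = j
      · subst hkj; rw [hy'j]; have := (hy k).1; have := (hx k).2; omega
      rw [hy'k k hki hkj]; exact hy k
    -- sums
    have hsum : ∑ k, y' k = ∑ k, y k := by
      have h1 := sum_update_eq (fun _ z => z) u j (y j + 1)
      have h2 := sum_update_eq (fun _ z => z) y i (y i - 1)
      rw [hy', h1, huj, hu, h2]
      ring
    -- abs sum decreases by 2
    have habs : ∑ k, |x k - y' k| = ∑ k, |x k - y k| - 2 := by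
      have h1 := sum_update_eq (fun k z => |x k - z|) u j (y j + 1)
      have h2 := sum_update_eq (fun k z => |x k - z|) y i (y i - 1)
      rw [hy', h1, huj, hu, h2]
      have e1 : |x j - (y j + 1)| = |x j - y j| - 1 := by
        rw [abs_of_nonneg (by omega), abs_of_nonneg (by omega)]; ring
      have e2 : |x i - (y i - 1)| = |x i - y i| - 1 := by
        rw [abs_of_nonpos (by omega), abs_of_nonpos (by omega)]; ring
      rw [e1, e2]; ring
    -- cost decreases
    have hA : f i (x i + 1) - f i (x i) ≤ f i (y i) - f i (y i - 1) := by
      have := diff_mono (f i) (b i) (hconv i) (x i) (y i - 1) (hx i).1 (by omega)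
        (by have := (hy i).2; omega)
      have e : y i - 1 + 1 = y i := by ring
      rwa [e] at this
    have hB : f j (y j + 1) - f j (y j) ≤ f j (x j) - f j (x j - 1) := by
      have := diff_mono (f j) (b j) (hconv j) (y j) (x j - 1) (hy j).1 (by omega)
        (by have := (hx j).2; omega)
      have e : x j - 1 + 1 = x j := by ring
      rwa [e] at this
    have hS : f i (x i) - f i (x i + 1) ≤ f j (x j - 1) - f j (x j) :=
      hstable j i (Ne.symm hij) (by have := (hy j).1; omega)
        (by have := (hy i).2; omega)
    have hcost : ∑ k, f k (y' k) ≤ ∑ k, f k (y k) := by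
      have h1 := sum_update_eq f u j (y j + 1)
      have h2 := sum_update_eq f y i (y i - 1)
      rw [hy', h1, huj, hu, h2]
      linarith
    -- apply IH
    have hnn' : (0:ℤ) ≤ ∑ k, |x k - y' k| := Finset.sum_nonneg fun k _ => abs_nonneg _
    have hN' : (∑ k, |x k - y' k|).toNat ≤ N := by
      rw [habs] at hnn' ⊢
      omega
    calc ∑ k, f k (x k) ≤ ∑ k, f k (y' k) := ih y' hfeas (by omega) hN'
      _ ≤ ∑ k, f k (y k) := hcost
end

section
/- Let F be a nonempty finite set of integer allocations x = (x_1,…,x_n), let φ : ℝⁿ → ℝ be nondecreasing in each coordinate, and let l_i, f_i, u_i : ℤ → ℝ satisfy l_i(k) ≤ f_i(k) ≤ u_i(k) for every i and every value k attained by the i-th coordinate on F. Let x^l ∈ F be a minimizer of x ↦ φ(l_1(x_1),…,l_n(x_n)) over F. Then φ(l_1(x^l_1),…,l_n(x^l_n)) ≤ min_{x∈F} φ(f_1(x_1),…,f_n(x_n)) ≤ φ(u_1(x^l_1),…,u_n(x^l_n)); consequently, for ε ≥ 0, if φ(u_1(x^l_1),…,u_n(x^l_n)) − φ(l_1(x^l_1),…,l_n(x^l_n))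 ≤ ε then φ(f_1(x^l_1),…,f_n(x^l_n)) ≤ min_{x∈F} φ(f_1(x_1),…,f_n(x_n)) + ε. -/
/-- Composite-objective sandwich bounds. Let `φ : ℝⁿ → ℝ` be
nondecreasing in each coordinate, `l_i ≤ f_i ≤ u_i` at every value attained by the
`i`-th coordinate on the nonempty finite feasible set `F`, and let `xl ∈ F` minimize
`x ↦ φ(l_1(x_1),…,l_n(x_n))` over `F`. Then
`φ(l(xl)) ≤ min_{x∈F} φ(f(x)) ≤ φ(u(xl))`; consequently, for `ε ≥ 0`, if the gap
`φ(u(xl)) − φ(l(xl))` is at most `ε` then `xl` is `ε`-optimal. -/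
theorem composite_sandwich_bounds
    (n : ℕ) (F : Finset (Fin n → ℤ)) (hF : F.Nonempty)
    (φ : (Fin n → ℝ) → ℝ)
    (hφ : ∀ a c : Fin n → ℝ, (∀ i, a i ≤ c i) → φ a ≤ φ c)
    (l f u : Fin n → ℤ → ℝ)
    (hlf : ∀ i : Fin n, ∀ x ∈ F, l i (x i) ≤ f i (x i))
    (hfu : ∀ i : Fin n, ∀ x ∈ F, f i (x i) ≤ u i (x i))
    (xl : Fin n → ℤ) (hxl : xl ∈ F)
    (hmin : ∀ y ∈ F, φ (fun i => l i (xl i)) ≤ φ (fun i => l i (y i))) :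
    (φ (fun i => l i (xl i)) ≤ F.inf' hF (fun x => φ (fun i => f i (x i))) ∧
      F.inf' hF (fun x => φ (fun i => f i (x i))) ≤ φ (fun i => u i (xl i))) ∧
    (∀ ε : ℝ, 0 ≤ ε →
      φ (fun i => u i (xl i)) - φ (fun i => l i (xl i)) ≤ ε →
      φ (fun i => f i (xl i)) ≤ F.inf' hF (fun x => φ (fun i => f i (x i))) + ε) := by
  have hlow : φ (fun i => l i (xl i)) ≤ F.inf' hF (fun x => φ (fun i => f i (x i))) := by
    apply Finset.le_inf'
    intro x hx
    exact le_trans (hmin x hx) (hφ _ _ (fun i => hlf i x hx))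
  have hup : F.inf' hF (fun x => φ (fun i => f i (x i))) ≤ φ (fun i => u i (xl i)) :=
    le_trans (Finset.inf'_le _ hxl) (hφ _ _ (fun i => hfu i xl hxl))
  refine ⟨⟨hlow, hup⟩, fun ε hε hgap => ?_⟩
  have h1 : φ (fun i => f i (xl i)) ≤ φ (fun i => u i (xl i)) :=
    hφ _ _ (fun i => hfu i xl hxl)
  linarith
end
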